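/- arXiv:1506.03050 — 4 statements merged into one kernel-verified Lean document; each statement's English description precedes it below -/
import Mathlib

section
/- For each fixed even integer $e > 0$, the coefficients $w_g$ of $\prod_{r \ge 1}(1+q^r)^{-e} \cdot \prod_{s \ge 1}(1-q^{2s})^{-(24-e)/2}$ satisfy $(-1)^g w_g > 0$ for all $g \ge 1$; i.e., $w_g$ is negative for odd $g$ and positive for even $g$. -/
/-!
Substituting `q ↦ -q` turns `(-1)^g w_g` into the coefficients of `W(-q)`. By Euler's identity
`∏ (1 + q^r)⁻¹ = ∏_{r odd} (1 - q^r)`,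
`W(-q) = ∏_{r odd} (1 + q^r)^e · ∏ (1 - q^{2s})^{-(24-e)/2}`
is a product of series with nonnegative coefficients; since `(1 + q) (1 - q^2)⁻¹ = (1 - q)⁻¹` has
all coefficients equal to `1`, every coefficient of `W(-q)` is positive. For the products truncated
at `g`, Euler's identity leaves over the factors `(1 - q^{2j})⁻¹` with `g < 2j`, which also have
nonnegative coefficients.
-/

open PowerSeries Finset

/-- Integer power of a power series over `ℚ`, using the power-series inverse
for negative exponents. -/
noncomputable def zp (f : PowerSeries ℚ) (n : ℤ) : PowerSeries ℚ :=
  if 0 ≤ n then f ^ n.toNat else f⁻¹ ^ (-n).toNat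

/-- The coefficient `w_g` of `∏_{r ≥ 1} (1+q^r)^{-e} · ∏_{s ≥ 1} (1-q^{2s})^{-(24-e)/2}`.
Since each factor with index `> g` is `1 + O(q^{g+1})`, the coefficient of `q^g`
equals that of the product truncated at index `g`. -/
noncomputable def W (e : ℤ) (g : ℕ) : ℚ :=
  PowerSeries.coeff g
    ((∏ r ∈ Icc 1 g, zp (1 + PowerSeries.X ^ r) (-e)) *
     (∏ s ∈ Icc 1 g, zp (1 - PowerSeries.X ^ (2 * s)) (-((24 - e) / 2))))

/-- The coefficient `c_g` of the Yau–Zaslow series `∏_{s ≥ 1} (1-q^s)^{-24}`. -/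
noncomputable def C (g : ℕ) : ℚ :=
  PowerSeries.coeff g (∏ s ∈ Icc 1 g, ((1 - PowerSeries.X ^ s)⁻¹) ^ 24)

namespace PowerSeries

section Field

variable {K : Type*} [Field K]

theorem map_inv_of_constantCoeff_ne_zero (φ : K⟦X⟧ →+* K⟦X⟧) {f : K⟦X⟧}
    (hf : constantCoeff f ≠ 0) (hφf : constantCoeff (φ f) ≠ 0) : φ f⁻¹ = (φ f)⁻¹ := by
  rw [eq_inv_iff_mul_eq_one hφf, ← map_mul, PowerSeries.inv_mul_cancel f hf, map_one]

theorem inv_one_sub_eq_one_add_mul_inv {a : K⟦X⟧} (ha : constantCoeff a = 0) :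
    (1 - a)⁻¹ = (1 + a) * (1 - a ^ 2)⁻¹ := by
  rw [eq_comm, eq_inv_iff_mul_eq_one (by simp [ha])]
  calc (1 + a) * (1 - a ^ 2)⁻¹ * (1 - a) = (1 - a ^ 2)⁻¹ * (1 - a ^ 2) := by ring
    _ = 1 := PowerSeries.inv_mul_cancel _ (by simp [ha])

theorem inv_one_add_X_pow {r : ℕ} (hr : r ≠ 0) :
    (1 + X ^ r : K⟦X⟧)⁻¹ = (1 - X ^ r) * (1 - X ^ (2 * r))⁻¹ := by
  rw [← sub_neg_eq_add, inv_one_sub_eq_one_add_mul_inv (by simp [hr]), neg_sq, ← pow_mul,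
    mul_comm r 2, ← sub_eq_add_neg]

theorem inv_one_sub_X : (1 - X : K⟦X⟧)⁻¹ = mk 1 := by
  rw [eq_comm, eq_inv_iff_mul_eq_one (by simp)]
  exact mk_one_mul_one_sub_eq_one K

theorem inv_one_sub_X_pow {t : ℕ} (ht : t ≠ 0) :
    (1 - X ^ t : K⟦X⟧)⁻¹ = expand t ht (mk 1) := by
  have h := map_inv_of_constantCoeff_ne_zero (expand t ht : K⟦X⟧ →ₐ[K] K⟦X⟧).toRingHom
    (f := 1 - X) (by simp) (by simp [ht])
  simpa [inv_one_sub_X] using h.symm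

theorem prod_Icc_inv_one_add_X_pow (n : ℕ) :
    ∏ r ∈ Icc 1 n, (1 + X ^ r : K⟦X⟧)⁻¹ =
      (∏ r ∈ (Icc 1 n).filter Odd, (1 - X ^ r)) *
        ∏ j ∈ (Icc 1 n).filter (n < 2 * ·), (1 - X ^ (2 * j))⁻¹ := by
  have heven : ∏ r ∈ (Icc 1 n).filter (¬ Odd ·), (1 - X ^ r : K⟦X⟧) =
      ∏ j ∈ (Icc 1 n).filter (¬ n < 2 * ·), (1 - X ^ (2 * j)) := by
    refine prod_nbij' (· / 2) (2 * ·) ?_ ?_ ?_ ?_ ?_ <;>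
      simp only [mem_filter, mem_Icc, Nat.not_odd_iff_even, Nat.even_iff] <;> intros <;> grind
  have hcancel : (∏ j ∈ (Icc 1 n).filter (¬ n < 2 * ·), (1 - X ^ (2 * j) : K⟦X⟧)) *
      ∏ j ∈ (Icc 1 n).filter (¬ n < 2 * ·), (1 - X ^ (2 * j))⁻¹ = 1 := by
    rw [← prod_mul_distrib]
    refine prod_eq_one fun j hj => PowerSeries.mul_inv_cancel _ ?_
    have : 2 * j ≠ 0 := by simp only [mem_filter, mem_Icc] at hj; omega
    simp [this]
  rw [prod_congr rfl fun r hr => inv_one_add_X_pow (by simp only [mem_Icc] at hr; omega),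
    prod_mul_distrib, ← prod_filter_mul_prod_filter_not (Icc 1 n) Odd, heven,
    ← prod_filter_mul_prod_filter_not (Icc 1 n) (n < 2 * ·) (fun j => (1 - X ^ (2 * j))⁻¹)]
  linear_combination (∏ r ∈ (Icc 1 n).filter Odd, (1 - X ^ r : K⟦X⟧)) *
    (∏ j ∈ (Icc 1 n).filter (n < 2 * ·), (1 - X ^ (2 * j))⁻¹) * hcancel

theorem rescale_neg_one_one_sub_X_pow_of_odd {r : ℕ} (hr : Odd r) :
    rescale (-1 : K) (1 - X ^ r) = 1 + X ^ r := by
  rw [map_sub, map_one, map_pow, rescale_neg_one_X, hr.neg_pow, sub_neg_eq_add]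

theorem rescale_neg_one_inv_one_sub_X_pow_two_mul {j : ℕ} (hj : j ≠ 0) :
    rescale (-1 : K) (1 - X ^ (2 * j))⁻¹ = (1 - X ^ (2 * j))⁻¹ := by
  have hrescale : rescale (-1 : K) (1 - X ^ (2 * j)) = 1 - X ^ (2 * j) := by
    rw [map_sub, map_one, map_pow, rescale_neg_one_X, (even_two_mul j).neg_pow]
  rw [map_inv_of_constantCoeff_ne_zero _ (by simp [hj]) (by simp [hrescale, hj]), hrescale]

theorem coeff_one_add_X_mul_inv_one_sub_X_sq (n : ℕ) :
    coeff n ((1 + X) * (1 - X ^ 2 : K⟦X⟧)⁻¹) = 1 := by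
  rw [← inv_one_sub_eq_one_add_mul_inv (by simp), inv_one_sub_X, coeff_mk, Pi.one_apply]

theorem rescale_neg_one_prod_inv_one_add_X_pow (n : ℕ) :
    rescale (-1 : K) (∏ r ∈ Icc 1 n, (1 + X ^ r)⁻¹) =
      (∏ r ∈ (Icc 1 n).filter Odd, (1 + X ^ r)) *
        ∏ j ∈ (Icc 1 n).filter (n < 2 * ·), (1 - X ^ (2 * j))⁻¹ := by
  rw [prod_Icc_inv_one_add_X_pow, map_mul, map_prod, map_prod]
  congr 1 <;> refine prod_congr rfl fun r hr => ?_
  · exact rescale_neg_one_one_sub_X_pow_of_odd (mem_filter.1 hr).2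
  · exact rescale_neg_one_inv_one_sub_X_pow_two_mul
      (by simp only [mem_filter, mem_Icc] at hr; omega)

theorem rescale_neg_one_prod_inv_one_sub_X_pow_two_mul (n : ℕ) :
    rescale (-1 : K) (∏ s ∈ Icc 1 n, (1 - X ^ (2 * s))⁻¹) =
      ∏ s ∈ Icc 1 n, (1 - X ^ (2 * s))⁻¹ := by
  rw [map_prod]
  exact prod_congr rfl fun s hs =>
    rescale_neg_one_inv_one_sub_X_pow_two_mul (by simp only [mem_Icc] at hs; omega)

end Field

section Ordered

variable {K : Type*} [Field K] [LinearOrder K] [IsStrictOrderedRing K]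

variable (K) in
def posConstNonnegSubmonoid : Submonoid K⟦X⟧ where
  carrier := {f | 0 < constantCoeff f ∧ ∀ n, 0 ≤ coeff n f}
  mul_mem' := by
    rintro f g ⟨hf0, hf⟩ ⟨hg0, hg⟩
    refine ⟨by simpa using mul_pos hf0 hg0, fun n => ?_⟩
    rw [coeff_mul]
    exact sum_nonneg fun p _ => mul_nonneg (hf _) (hg _)
  one_mem' := ⟨by simp, fun n => by rw [coeff_one]; split_ifs <;> norm_num⟩

theorem one_add_X_pow_mem (r : ℕ) : (1 + X ^ r : K⟦X⟧) ∈ posConstNonnegSubmonoid K := by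
  refine ⟨?_, fun n => ?_⟩
  · rcases eq_or_ne r 0 with rfl | hr <;> simp [*]
  · rw [map_add, coeff_one, coeff_X_pow]
    split_ifs <;> norm_num

theorem inv_one_sub_X_pow_mem {t : ℕ} (ht : t ≠ 0) :
    (1 - X ^ t : K⟦X⟧)⁻¹ ∈ posConstNonnegSubmonoid K := by
  rw [inv_one_sub_X_pow ht]
  refine ⟨by simp, fun n => ?_⟩
  rw [coeff_expand]
  split_ifs <;> simp

theorem coeff_pos_mul_of_mem {f g : K⟦X⟧} (hf : ∀ n, 0 < coeff n f)
    (hg : g ∈ posConstNonnegSubmonoid K) (n : ℕ) : 0 < coeff n (f * g) := by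
  rw [coeff_mul]
  calc 0 < coeff n f * coeff 0 g := mul_pos (hf n) (by simpa using hg.1)
    _ ≤ ∑ p ∈ antidiagonal n, coeff p.1 f * coeff p.2 g :=
      single_le_sum (f := fun p => coeff p.1 f * coeff p.2 g)
        (fun p _ => mul_nonneg (hf _).le (hg.2 _)) (by simp : (n, 0) ∈ antidiagonal n)

theorem coeff_pos_prod_mul_prod {ι κ : Type*} {s : Finset ι} {t : Finset κ}
    {u : ι → K⟦X⟧} {v : κ → K⟦X⟧} {i : ι} {j : κ} (hi : i ∈ s) (hj : j ∈ t)
    (hu : ∀ a ∈ s, u a ∈ posConstNonnegSubmonoid K)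
    (hv : ∀ b ∈ t, v b ∈ posConstNonnegSubmonoid K)
    (huv : ∀ n, 0 < coeff n (u i * v j)) (n : ℕ) :
    0 < coeff n ((∏ a ∈ s, u a) * ∏ b ∈ t, v b) := by
  classical
  rw [← mul_prod_erase s u hi, ← mul_prod_erase t v hj, mul_mul_mul_comm]
  exact coeff_pos_mul_of_mem huv (mul_mem (prod_mem fun a ha => hu a (mem_of_mem_erase ha))
    (prod_mem fun b hb => hv b (mem_of_mem_erase hb))) n

theorem coeff_pos_pow_mul_pow {f g : K⟦X⟧} (hf : f ∈ posConstNonnegSubmonoid K)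
    (hg : g ∈ posConstNonnegSubmonoid K) (hfg : ∀ n, 0 < coeff n (f * g)) {a b : ℕ}
    (ha : a ≠ 0) (hb : b ≠ 0) (n : ℕ) : 0 < coeff n (f ^ a * g ^ b) := by
  obtain ⟨a, rfl⟩ := Nat.exists_eq_add_one_of_ne_zero ha
  obtain ⟨b, rfl⟩ := Nat.exists_eq_add_one_of_ne_zero hb
  rw [show f ^ (a + 1) * g ^ (b + 1) = f * g * (f ^ a * g ^ b) by ring]
  exact coeff_pos_mul_of_mem hfg (mul_mem (pow_mem hf a) (pow_mem hg b)) n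

theorem coeff_pos_rescale_neg_one {E M g : ℕ} (hE : E ≠ 0) (hM : M ≠ 0) (hg : g ≠ 0)
    (n : ℕ) :
    0 < coeff n (rescale (-1 : K) ((∏ r ∈ Icc 1 g, (1 + X ^ r : K⟦X⟧)⁻¹) ^ E *
      (∏ s ∈ Icc 1 g, (1 - X ^ (2 * s) : K⟦X⟧)⁻¹) ^ M)) := by
  rw [map_mul, map_pow, map_pow, rescale_neg_one_prod_inv_one_add_X_pow,
    rescale_neg_one_prod_inv_one_sub_X_pow_two_mul]
  have hodd :
      ∀ r ∈ (Icc 1 g).filter Odd, (1 + X ^ r : K⟦X⟧) ∈ posConstNonnegSubmonoid K :=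
    fun r _ => one_add_X_pow_mem r
  have heven : ∀ s ∈ Icc 1 g, (1 - X ^ (2 * s) : K⟦X⟧)⁻¹ ∈ posConstNonnegSubmonoid K :=
    fun s hs => inv_one_sub_X_pow_mem (by simp only [mem_Icc] at hs; omega)
  have hunpaired : ∀ j ∈ (Icc 1 g).filter (g < 2 * ·),
      (1 - X ^ (2 * j) : K⟦X⟧)⁻¹ ∈ posConstNonnegSubmonoid K :=
    fun j hj => heven j (mem_filter.1 hj).1
  have hodd_even : ∀ n, 0 < coeff n ((∏ r ∈ (Icc 1 g).filter Odd, (1 + X ^ r : K⟦X⟧)) *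
      ∏ s ∈ Icc 1 g, (1 - X ^ (2 * s))⁻¹) :=
    coeff_pos_prod_mul_prod (i := 1) (j := 1)
      (mem_filter.2 ⟨mem_Icc.2 ⟨le_rfl, by omega⟩, odd_one⟩) (mem_Icc.2 ⟨le_rfl, by omega⟩)
      hodd heven
      fun n => by simp [coeff_one_add_X_mul_inv_one_sub_X_sq]
  refine coeff_pos_pow_mul_pow (mul_mem (prod_mem hodd) (prod_mem hunpaired)) (prod_mem heven)
    (fun n => ?_) hE hM n
  rw [mul_right_comm]
  exact coeff_pos_mul_of_mem hodd_even (prod_mem hunpaired) n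

end Ordered

end PowerSeries

theorem zp_neg_natCast (f : ℚ⟦X⟧) (n : ℕ) : zp f (-n) = f⁻¹ ^ n := by
  rw [zp]
  split_ifs with h
  · obtain rfl : n = 0 := by omega
    simp
  · simp

theorem W_natCast {E M : ℕ} (hM : (24 - (E : ℤ)) / 2 = M) (g : ℕ) :
    W E g = coeff g ((∏ r ∈ Icc 1 g, (1 + X ^ r : ℚ⟦X⟧)⁻¹) ^ E *
      (∏ s ∈ Icc 1 g, (1 - X ^ (2 * s) : ℚ⟦X⟧)⁻¹) ^ M) := by
  simp only [W, hM, zp_neg_natCast, prod_pow]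

theorem stmt3_general (e : ℤ) (hpos : 0 < e) (hle : e ≤ 20) :
    ∀ g : ℕ, 1 ≤ g → 0 < (-1 : ℚ) ^ g * W e g := by
  intro g hg
  obtain ⟨E, rfl⟩ := Int.eq_ofNat_of_zero_le hpos.le
  obtain ⟨M, hM⟩ := Int.eq_ofNat_of_zero_le (by omega : 0 ≤ (24 - (E : ℤ)) / 2)
  rw [W_natCast hM, ← coeff_rescale]
  exact coeff_pos_rescale_neg_one (by omega) (by omega) (by omega) g

theorem stmt3 (e : ℤ) (he : Even e) (hpos : 0 < e) (hle : e ≤ 20) :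
    ∀ g : ℕ, 1 ≤ g → 0 < (-1 : ℚ) ^ g * W e g :=
  stmt3_general e hpos hle
end

section
/- The coefficients $c_g$ of the formal power series $\prod_{s \ge 1}(1-q^s)^{-24}$ satisfy $c_g \equiv 0 \pmod 2$ for every $g \ge 1$ with $g \not\equiv 0 \pmod 8$. -/
/-! Reducing mod 2, Frobenius gives `(1 - q^s)^24 = (1 - q^(8s))^3`, so modulo 2 the series
`∏ (1 - q^s)^(-24)` is the expansion `q ↦ q^8` of `∏ (1 - q^s)^(-3)` and has no terms outside
degrees divisible by 8. The coefficients are integers because every factor `1 - q^s` is already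
invertible in `ℤ⟦q⟧`. -/

open PowerSeries Finset

namespace PowerSeries

instance instCharP {R : Type*} [CommRing R] (p : ℕ) [CharP R p] : CharP R⟦X⟧ p :=
  charP_of_injective_ringHom C_injective p

theorem apply_invOfUnit_one {R S : Type*} [CommRing R] [CommRing S] (ψ : R⟦X⟧ →+* S⟦X⟧)
    {φ : R⟦X⟧} (hφ : constantCoeff φ = 1) (hψφ : constantCoeff (ψ φ) = 1) :
    ψ (invOfUnit φ 1) = invOfUnit (ψ φ) 1 := by
  refine left_inv_eq_right_inv ?_ (mul_invOfUnit _ _ (by rw [hψφ, Units.val_one]))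
  rw [← map_mul, invOfUnit_mul _ _ (by rw [hφ, Units.val_one]), map_one]

variable (R : Type*) [CommRing R]

noncomputable def eulerProd (g m : ℕ) : R⟦X⟧ :=
  ∏ s ∈ Icc 1 g, (1 - X ^ s) ^ m

noncomputable def eulerProdInv (g m : ℕ) : R⟦X⟧ :=
  invOfUnit (eulerProd R g m) 1

variable {R}

theorem constantCoeff_one_sub_X_pow {s : ℕ} (hs : s ≠ 0) :
    constantCoeff (1 - X ^ s : R⟦X⟧) = 1 := by
  simp [zero_pow hs]

theorem constantCoeff_eulerProd (g m : ℕ) : constantCoeff (eulerProd R g m) = 1 := by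
  rw [eulerProd, map_prod]
  refine prod_eq_one fun s hs => ?_
  rw [map_pow, constantCoeff_one_sub_X_pow (by grind), one_pow]

theorem map_eulerProd {S : Type*} [CommRing S] (f : R →+* S) (g m : ℕ) :
    map f (eulerProd R g m) = eulerProd S g m := by
  simp [eulerProd, map_prod]

theorem map_eulerProdInv {S : Type*} [CommRing S] (f : R →+* S) (g m : ℕ) :
    map f (eulerProdInv R g m) = eulerProdInv S g m := by
  rw [eulerProdInv, apply_invOfUnit_one (map f) (constantCoeff_eulerProd g m)
    (by rw [map_eulerProd, constantCoeff_eulerProd]), map_eulerProd, eulerProdInv]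

theorem eulerProd_char_pow_mul (p : ℕ) [Fact p.Prime] [CharP R p] (k g m : ℕ) :
    eulerProd R g (p ^ k * m) = expand (p ^ k) (NeZero.ne _) (eulerProd R g m) := by
  rw [eulerProd, eulerProd, map_prod]
  refine prod_congr rfl fun s _ => ?_
  rw [pow_mul, sub_pow_char_pow, one_pow, map_pow, map_sub, map_one, map_pow, expand_X,
    pow_right_comm]

theorem eulerProdInv_char_pow_mul (p : ℕ) [Fact p.Prime] [CharP R p] (k g m : ℕ) :
    eulerProdInv R g (p ^ k * m) = expand (p ^ k) (NeZero.ne _) (eulerProdInv R g m) := by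
  rw [eulerProdInv, eulerProdInv, eulerProd_char_pow_mul p]
  exact (apply_invOfUnit_one (expand (p ^ k) _).toRingHom (constantCoeff_eulerProd g m)
    (by simp [constantCoeff_eulerProd])).symm

theorem eulerProdInv_eq_prod_inv_pow {k : Type*} [Field k] (g m : ℕ) :
    eulerProdInv k g m = ∏ s ∈ Icc 1 g, ((1 - X ^ s)⁻¹) ^ m := by
  rw [eulerProdInv, invOfUnit_eq' _ _ (by rw [constantCoeff_eulerProd, Units.val_one]),
    inv_eq_iff_mul_eq_one (by simp [constantCoeff_eulerProd]), eulerProd, ← prod_mul_distrib]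
  refine prod_eq_one fun s hs => ?_
  rw [← mul_pow, PowerSeries.inv_mul_cancel _ (by
    simp [constantCoeff_one_sub_X_pow (by grind : s ≠ 0)]), one_pow]

theorem prime_dvd_coeff_eulerProdInv (p : ℕ) [Fact p.Prime] {k n : ℕ} (hn : ¬ p ^ k ∣ n)
    (g m : ℕ) : (p : ℤ) ∣ coeff n (eulerProdInv ℤ g (p ^ k * m)) := by
  rw [← ZMod.intCast_zmod_eq_zero_iff_dvd, ← eq_intCast (Int.castRingHom (ZMod p)),
    ← coeff_map, map_eulerProdInv, eulerProdInv_char_pow_mul p]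
  exact coeff_expand_of_not_dvd _ _ _ hn

end PowerSeries

theorem stmt7_general (g : ℕ) (h8 : ¬ (8 ∣ g)) :
    ∃ k : ℤ, _root_.C g = 2 * k := by
  have hC : _root_.C g = ((coeff g (eulerProdInv ℤ g 24) : ℤ) : ℚ) := by
    rw [_root_.C, ← eulerProdInv_eq_prod_inv_pow, ← map_eulerProdInv (Int.castRingHom ℚ),
      coeff_map, eq_intCast]
  obtain ⟨k, hk⟩ := prime_dvd_coeff_eulerProdInv 2 (k := 3) h8 g 3
  exact ⟨k, by rw [hC, show 24 = 2 ^ 3 * 3 from rfl, hk]; push_cast; ring⟩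

theorem stmt7 (g : ℕ) (hg : 1 ≤ g) (h8 : ¬ (8 ∣ g)) :
    ∃ k : ℤ, _root_.C g = 2 * k :=
  stmt7_general g h8
end

section
/- If $e \equiv 0 \pmod 4$, then the coefficients $w_g$ of $\prod_{r \ge 1}(1+q^r)^{-e}\prod_{s \ge 1}(1-q^{2s})^{-(24-e)/2}$ and $c_g$ of $\prod_{s \ge 1}(1-q^s)^{-24}$ satisfy $w_g \equiv c_g \pmod 4$ for all $g \ge 0$; moreover $w_g \equiv c_g \equiv 0 \pmod 4$ whenever $g \ge 1$ and $g \not\equiv 0 \pmod 4$. -/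
open PowerSeries Finset

/-!
Modulo 4 one has `(1 + y)^4 = (1 - y^2)^2` for every `y`. When `4 ∣ e` the exponents `-e`, `-24`
and `-12` are multiples of 4, so taking `y = q^r`, `y = -q^s` and `y = -q^{2s}` turns the series
of the `w_g` and that of the `c_g` both into `∏ (1 - q^{2s})^{-12} ≡ ∏ (1 - q^{4s})^{-6}`, a series
in `q^4`. All factors are units of `ℤ⟦q⟧`, so the coefficients are integers and may be reduced
modulo 4.
-/

theorem ne_zero_of_mem_Icc_one {s g : ℕ} (hs : s ∈ Icc 1 g) : s ≠ 0 :=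
  Nat.one_le_iff_ne_zero.mp (mem_Icc.mp hs).1

theorem zpow_four_mul_eq {G : Type*} [Group G] {a b : G} (h : a ^ 4 = b ^ 2) (k : ℤ) :
    a ^ (4 * k) = b ^ (2 * k) := by
  rw [zpow_mul, zpow_mul]
  exact_mod_cast congrArg (· ^ k) h

namespace PowerSeries

variable {R S : Type*} [CommRing R] [CommRing S]

open Classical in
/-- `1 + f` as a unit (junk value `1` when `constantCoeff f ≠ 0`). -/
noncomputable def oneAddUnit (f : R⟦X⟧) : R⟦X⟧ˣ :=
  if h : constantCoeff f = 0 then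
    (isUnit_iff_constantCoeff.mpr (by simp [h] : IsUnit (constantCoeff (1 + f)))).unit
  else 1

theorem val_oneAddUnit {f : R⟦X⟧} (hf : constantCoeff f = 0) :
    (oneAddUnit f : R⟦X⟧) = 1 + f := by
  rw [oneAddUnit, dif_pos hf, IsUnit.unit_spec]

theorem map_oneAddUnit {F : Type*} [FunLike F R⟦X⟧ S⟦X⟧] [RingHomClass F R⟦X⟧ S⟦X⟧] (ψ : F)
    {f : R⟦X⟧} (hf : constantCoeff f = 0) (hψf : constantCoeff (ψ f) = 0) :
    Units.map (ψ : R⟦X⟧ →* S⟦X⟧) (oneAddUnit f) = oneAddUnit (ψ f) := by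
  ext1
  rw [Units.coe_map, val_oneAddUnit hf, val_oneAddUnit hψf, MonoidHom.coe_coe, map_add, map_one]

theorem map_map_oneAddUnit (φ : R →+* S) {f : R⟦X⟧} (hf : constantCoeff f = 0) :
    Units.map (map φ : R⟦X⟧ →* S⟦X⟧) (oneAddUnit f) = oneAddUnit (map φ f) :=
  map_oneAddUnit _ hf (by rw [← coeff_zero_eq_constantCoeff_apply, coeff_map,
    coeff_zero_eq_constantCoeff_apply, hf, map_zero])

theorem oneAddUnit_pow_four (h4 : (4 : R) = 0) {f : R⟦X⟧} (hf : constantCoeff f = 0) :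
    oneAddUnit f ^ 4 = oneAddUnit (-f ^ 2) ^ 2 := by
  have h4' : (4 : R⟦X⟧) = 0 := by rw [← map_ofNat (C (R := R)), h4, map_zero]
  ext1
  rw [Units.val_pow_eq_pow_val, Units.val_pow_eq_pow_val, val_oneAddUnit hf,
    val_oneAddUnit (by simp [hf])]
  linear_combination (f + 2 * f ^ 2 + f ^ 3) * h4'

theorem val_inv_eq_inv_val {k : Type*} [Field k] (v : k⟦X⟧ˣ) : (↑v⁻¹ : k⟦X⟧) = (↑v)⁻¹ := by
  rw [eq_inv_iff_mul_eq_one ((isUnit_constantCoeff _ v.isUnit).ne_zero), Units.inv_mul]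

variable (R) in
noncomputable def eulerUnit (d : ℕ) (k : ℤ) (g : ℕ) : R⟦X⟧ˣ :=
  ∏ s ∈ Icc 1 g, oneAddUnit (-X ^ (d * s)) ^ k

theorem eulerUnit_mul_eulerUnit (d : ℕ) (k l : ℤ) (g : ℕ) :
    eulerUnit R d k g * eulerUnit R d l g = eulerUnit R d (k + l) g := by
  simp only [eulerUnit, ← prod_mul_distrib, zpow_add]

theorem eulerUnit_four_mul (h4 : (4 : R) = 0) {d : ℕ} (hd : d ≠ 0) (k : ℤ) (g : ℕ) :
    eulerUnit R d (4 * k) g = eulerUnit R (2 * d) (2 * k) g := by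
  refine prod_congr rfl fun s hs => zpow_four_mul_eq ?_ k
  have hs : s ≠ 0 := ne_zero_of_mem_Icc_one hs
  rw [oneAddUnit_pow_four h4 (by simp [hd, hs]), neg_sq, ← pow_mul, mul_comm (d * s), mul_assoc]

theorem map_expand_eulerUnit {p : ℕ} (hp : p ≠ 0) {d : ℕ} (hd : d ≠ 0) (k : ℤ) (g : ℕ) :
    Units.map (expand (R := R) p hp : R⟦X⟧ →* R⟦X⟧) (eulerUnit R d k g) =
      eulerUnit R (p * d) k g := by
  simp only [eulerUnit, map_prod, map_zpow]
  refine prod_congr rfl fun s hs => ?_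
  have hs : s ≠ 0 := ne_zero_of_mem_Icc_one hs
  rw [map_oneAddUnit _ (by simp [hd, hs]) (by simp [hp, hd, hs])]
  simp [pow_mul, mul_assoc]

theorem map_map_eulerUnit (φ : R →+* S) {d : ℕ} (hd : d ≠ 0) (k : ℤ) (g : ℕ) :
    Units.map (map φ : R⟦X⟧ →* S⟦X⟧) (eulerUnit R d k g) = eulerUnit S d k g := by
  simp only [eulerUnit, map_prod, map_zpow]
  refine prod_congr rfl fun s hs => ?_
  have hs : s ≠ 0 := ne_zero_of_mem_Icc_one hs
  rw [map_map_oneAddUnit _ (by simp [hd, hs])]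
  simp

variable (R) in
noncomputable def wUnit (e : ℤ) (g : ℕ) : R⟦X⟧ˣ :=
  (∏ r ∈ Icc 1 g, oneAddUnit (X ^ r) ^ (-e)) * eulerUnit R 2 (-((24 - e) / 2)) g

theorem map_map_wUnit (φ : R →+* S) (e : ℤ) (g : ℕ) :
    Units.map (map φ : R⟦X⟧ →* S⟦X⟧) (wUnit R e g) = wUnit S e g := by
  rw [wUnit, wUnit, map_mul, map_map_eulerUnit φ two_ne_zero, map_prod]
  congr 1
  refine prod_congr rfl fun r hr => ?_
  have hr : r ≠ 0 := ne_zero_of_mem_Icc_one hr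
  rw [map_zpow, map_map_oneAddUnit _ (by simp [hr])]
  simp

theorem prod_oneAddUnit_X_pow_four_mul (h4 : (4 : R) = 0) (k : ℤ) (g : ℕ) :
    ∏ r ∈ Icc 1 g, oneAddUnit (X ^ r : R⟦X⟧) ^ (4 * k) = eulerUnit R 2 (2 * k) g := by
  refine prod_congr rfl fun r hr => zpow_four_mul_eq ?_ k
  have hr : r ≠ 0 := ne_zero_of_mem_Icc_one hr
  rw [oneAddUnit_pow_four h4 (by simp [hr]), ← pow_mul, mul_comm]

theorem wUnit_of_four_dvd (h4 : (4 : R) = 0) {e : ℤ} (he : 4 ∣ e) (g : ℕ) :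
    wUnit R e g = eulerUnit R 2 (-12) g := by
  obtain ⟨f, rfl⟩ := he
  rw [wUnit, neg_mul_eq_mul_neg, prod_oneAddUnit_X_pow_four_mul h4, eulerUnit_mul_eulerUnit]
  congr 1
  omega

theorem coeff_eulerUnit_two_neg_twelve (h4 : (4 : R) = 0) (g : ℕ) {n : ℕ} (hn : ¬ 4 ∣ n) :
    coeff n (eulerUnit R 2 (-12) g : R⟦X⟧) = 0 := by
  rw [show (-12 : ℤ) = 4 * -3 by norm_num, eulerUnit_four_mul h4 two_ne_zero,
    show eulerUnit R (2 * 2) (2 * -3) g = eulerUnit R (4 * 1) (-6) g from rfl,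
    ← map_expand_eulerUnit four_ne_zero one_ne_zero, Units.coe_map]
  exact coeff_expand_of_not_dvd 4 four_ne_zero _ hn

theorem map_coeff_val (φ : R →+* S) (u : R⟦X⟧ˣ) (n : ℕ) :
    φ (coeff n (u : R⟦X⟧)) = coeff n (Units.map (map φ : R⟦X⟧ →* S⟦X⟧) u : S⟦X⟧) :=
  (coeff_map φ n u).symm

end PowerSeries

theorem zp_val (v : ℚ⟦X⟧ˣ) (n : ℤ) : zp v n = ↑(v ^ n) := by
  unfold zp
  split_ifs with hn
  · rw [← Units.val_pow_eq_pow_val, ← zpow_natCast, Int.toNat_of_nonneg hn]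
  · rw [← val_inv_eq_inv_val, ← Units.val_pow_eq_pow_val, ← zpow_natCast,
      Int.toNat_of_nonneg (by omega), zpow_neg, inv_zpow', zpow_neg, inv_inv]

theorem zp_one_add {f : ℚ⟦X⟧} (hf : constantCoeff f = 0) (n : ℤ) :
    zp (1 + f) n = ↑(oneAddUnit f ^ n) := by
  rw [← val_oneAddUnit hf, zp_val]

theorem W_eq_intCast_coeff (e : ℤ) (g : ℕ) :
    W e g = ((coeff g (wUnit ℤ e g : ℤ⟦X⟧) : ℤ) : ℚ) := by
  rw [← eq_intCast (Int.castRingHom ℚ), map_coeff_val, map_map_wUnit, wUnit, eulerUnit,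
    Units.val_mul, Units.coe_prod, Units.coe_prod, W]
  refine congrArg (coeff g) (congrArg₂ (· * ·) (prod_congr rfl fun r hr => ?_)
    (prod_congr rfl fun s hs => ?_))
  · have hr : r ≠ 0 := ne_zero_of_mem_Icc_one hr
    exact zp_one_add (by simp [hr]) _
  · have hs : s ≠ 0 := ne_zero_of_mem_Icc_one hs
    rw [sub_eq_add_neg]
    exact zp_one_add (by simp [hs]) _

theorem C_eq_intCast_coeff (g : ℕ) :
    _root_.C g = ((coeff g (eulerUnit ℤ 1 (-24) g : ℤ⟦X⟧) : ℤ) : ℚ) := by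
  rw [← eq_intCast (Int.castRingHom ℚ), map_coeff_val, map_map_eulerUnit _ one_ne_zero,
    eulerUnit, Units.coe_prod, _root_.C]
  refine congrArg (coeff g) (prod_congr rfl fun s hs => ?_)
  have hs : s ≠ 0 := ne_zero_of_mem_Icc_one hs
  rw [← zp_one_add (by simp [hs]), one_mul, ← sub_eq_add_neg]
  simp [zp]

theorem exists_eq_four_mul_of_intCast_eq_zero {a : ℤ} (h : (a : ZMod 4) = 0) :
    ∃ k : ℤ, (a : ℚ) = 4 * k := by
  obtain ⟨k, rfl⟩ := (ZMod.intCast_zmod_eq_zero_iff_dvd a 4).mp h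
  exact ⟨k, by push_cast; ring⟩

theorem stmt9 (e : ℤ) (he : (4 : ℤ) ∣ e) :
    (∀ g : ℕ, ∃ k : ℤ, W e g - _root_.C g = 4 * k) ∧
    (∀ g : ℕ, 1 ≤ g → ¬ (4 ∣ g) →
      (∃ k : ℤ, W e g = 4 * k) ∧ (∃ k : ℤ, _root_.C g = 4 * k)) := by
  have h4 : (4 : ZMod 4) = 0 := rfl
  have hW (g : ℕ) : ((coeff g (wUnit ℤ e g : ℤ⟦X⟧) : ℤ) : ZMod 4) =
      coeff g (eulerUnit (ZMod 4) 2 (-12) g : (ZMod 4)⟦X⟧) := by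
    rw [← eq_intCast (Int.castRingHom _), map_coeff_val, map_map_wUnit,
      wUnit_of_four_dvd h4 he]
  have hC (g : ℕ) : ((coeff g (eulerUnit ℤ 1 (-24) g : ℤ⟦X⟧) : ℤ) : ZMod 4) =
      coeff g (eulerUnit (ZMod 4) 2 (-12) g : (ZMod 4)⟦X⟧) := by
    rw [← eq_intCast (Int.castRingHom _), map_coeff_val, map_map_eulerUnit _ one_ne_zero,
      show (-24 : ℤ) = 4 * -6 by norm_num, eulerUnit_four_mul h4 one_ne_zero]
    rfl
  refine ⟨fun g => ?_, fun g _ hg => ⟨?_, ?_⟩⟩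
  · rw [W_eq_intCast_coeff, C_eq_intCast_coeff, ← Int.cast_sub]
    exact exists_eq_four_mul_of_intCast_eq_zero (by rw [Int.cast_sub, hW, hC, sub_self])
  · rw [W_eq_intCast_coeff]
    exact exists_eq_four_mul_of_intCast_eq_zero
      (by rw [hW, coeff_eulerUnit_two_neg_twelve h4 g hg])
  · rw [C_eq_intCast_coeff]
    exact exists_eq_four_mul_of_intCast_eq_zero
      (by rw [hC, coeff_eulerUnit_two_neg_twelve h4 g hg])
end

section
/- If $e \equiv 0 \pmod 3$ and $g \not\equiv 0 \pmod 3$, $g \ge 1$, then $w_g \equiv c_g \equiv 0 \pmod 3$. -/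
open PowerSeries Finset

/-! Over `ZMod p` the Frobenius gives `F ^ p = F(X ^ p)` for every power series `F`, so the
`p`-th power of an integral power series has all its coefficients away from multiples of `p`
divisible by `p`. For `e` even and divisible by `3`, both series are cubes of integral power
series: each factor is `(1 ± X ^ m) ^ n` with `3 ∣ n`, and `1 ± X ^ m` is a unit of `ℤ⟦X⟧`. -/

theorem zp_coe_units (v : ℚ⟦X⟧ˣ) (n : ℤ) : zp ↑v n = ↑(v ^ n) := by
  have hv : constantCoeff (v : ℚ⟦X⟧) ≠ 0 := (isUnit_iff_constantCoeff.mp v.isUnit).ne_zero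
  unfold zp
  split_ifs with hn
  · lift n to ℕ using hn
    simp
  · obtain ⟨m, rfl⟩ : ∃ m : ℕ, n = -m := ⟨(-n).toNat, by omega⟩
    have hinv : (v : ℚ⟦X⟧)⁻¹ = ↑v⁻¹ := (PowerSeries.inv_eq_iff_mul_eq_one hv).mpr v.inv_mul
    rw [neg_neg, Int.toNat_natCast, zpow_neg, zpow_natCast, ← inv_pow,
      Units.val_pow_eq_pow_val, hinv]

namespace PowerSeries

theorem isUnit_one_add_X_pow {R : Type*} [CommRing R] {m : ℕ} (hm : m ≠ 0) :
    IsUnit (1 + X ^ m : R⟦X⟧) :=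
  isUnit_iff_constantCoeff.mpr (by simp [hm])

theorem isUnit_one_sub_X_pow {R : Type*} [CommRing R] {m : ℕ} (hm : m ≠ 0) :
    IsUnit (1 - X ^ m : R⟦X⟧) :=
  isUnit_iff_constantCoeff.mpr (by simp [hm])

variable (p : ℕ)

theorem expand_zmod_eq_pow [Fact p.Prime] (f : (ZMod p)⟦X⟧) : expand p (NeZero.ne p) f = f ^ p := by
  have := MvPowerSeries.map_frobenius_expand p (NeZero.ne p) (f := f)
  rwa [ZMod.frobenius_zmod, MvPowerSeries.map_id] at this

theorem prime_dvd_coeff_pow [Fact p.Prime] (G : ℤ⟦X⟧) {n : ℕ} (hn : ¬ p ∣ n) :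
    (p : ℤ) ∣ coeff n (G ^ p) := by
  rw [← ZMod.intCast_zmod_eq_zero_iff_dvd, ← eq_intCast (Int.castRingHom (ZMod p)),
    ← coeff_map, map_pow, ← expand_zmod_eq_pow, coeff_expand_of_not_dvd p _ _ hn]

noncomputable def powIntSubmonoid : Submonoid ℚ⟦X⟧ :=
  MonoidHom.mrange ((map (Int.castRingHom ℚ)).toMonoidHom.comp (powMonoidHom p))

theorem mem_powIntSubmonoid {F : ℚ⟦X⟧} :
    F ∈ powIntSubmonoid p ↔ ∃ G : ℤ⟦X⟧, map (Int.castRingHom ℚ) (G ^ p) = F :=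
  Iff.rfl

theorem exists_coeff_eq_mul_of_mem [Fact p.Prime] {F : ℚ⟦X⟧} (hF : F ∈ powIntSubmonoid p)
    {n : ℕ} (hn : ¬ p ∣ n) : ∃ k : ℤ, coeff n F = p * k := by
  obtain ⟨G, rfl⟩ := (mem_powIntSubmonoid p).mp hF
  obtain ⟨k, hk⟩ := prime_dvd_coeff_pow p G hn
  exact ⟨k, by rw [coeff_map, hk]; simp⟩

theorem zp_mem_powIntSubmonoid {G : ℤ⟦X⟧} (hG : IsUnit G) {n : ℤ} (hn : (p : ℤ) ∣ n) :
    zp (map (Int.castRingHom ℚ) G) n ∈ powIntSubmonoid p := by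
  obtain ⟨u, rfl⟩ := hG
  obtain ⟨k, rfl⟩ := hn
  refine (mem_powIntSubmonoid p).mpr ⟨↑(u ^ k), ?_⟩
  have hmap : map (Int.castRingHom ℚ) ↑u =
      ↑(Units.map (map (Int.castRingHom ℚ)).toMonoidHom u) := rfl
  rw [hmap, zp_coe_units, ← map_zpow, Units.coe_map, zpow_mul', zpow_natCast,
    Units.val_pow_eq_pow_val]
  rfl

theorem zp_one_add_X_pow_mem {m : ℕ} (hm : m ≠ 0) {n : ℤ} (hn : (p : ℤ) ∣ n) :
    zp (1 + X ^ m) n ∈ powIntSubmonoid p := by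
  simpa using zp_mem_powIntSubmonoid p (isUnit_one_add_X_pow hm) hn

theorem zp_one_sub_X_pow_mem {m : ℕ} (hm : m ≠ 0) {n : ℤ} (hn : (p : ℤ) ∣ n) :
    zp (1 - X ^ m) n ∈ powIntSubmonoid p := by
  simpa using zp_mem_powIntSubmonoid p (isUnit_one_sub_X_pow hm) hn

end PowerSeries

theorem stmt11_general (e : ℤ) (he : Even e) (h3 : (3 : ℤ) ∣ e)
    (g : ℕ) (hg3 : ¬ (3 ∣ g)) :
    (∃ k : ℤ, W e g = 3 * k) ∧ (∃ k : ℤ, _root_.C g = 3 * k) := by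
  have h24 : (3 : ℤ) ∣ (24 - e) / 2 := by obtain ⟨a, rfl⟩ := he; omega
  have hW : (∏ r ∈ Icc 1 g, zp (1 + X ^ r) (-e)) *
      (∏ s ∈ Icc 1 g, zp (1 - X ^ (2 * s)) (-((24 - e) / 2))) ∈ powIntSubmonoid 3 :=
    mul_mem
      (prod_mem fun r hr => zp_one_add_X_pow_mem 3 (m := r) (by grind) (by simpa using h3))
      (prod_mem fun s hs => zp_one_sub_X_pow_mem 3 (m := 2 * s) (by grind) (by simpa using h24))
  have hC : ∏ s ∈ Icc 1 g, ((1 - X ^ s : ℚ⟦X⟧)⁻¹) ^ 24 ∈ powIntSubmonoid 3 :=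
    prod_mem fun s hs => by
      simpa [zp] using zp_one_sub_X_pow_mem 3 (m := s) (by grind) (n := -24) (by norm_num)
  exact ⟨by simpa [W] using exists_coeff_eq_mul_of_mem 3 hW hg3,
    by simpa [_root_.C] using exists_coeff_eq_mul_of_mem 3 hC hg3⟩

theorem stmt11 (e : ℤ) (he : Even e) (h3 : (3 : ℤ) ∣ e)
    (g : ℕ) (hg : 1 ≤ g) (hg3 : ¬ (3 ∣ g)) :
    (∃ k : ℤ, W e g = 3 * k) ∧ (∃ k : ℤ, _root_.C g = 3 * k) :=
  stmt11_general e he h3 g hg3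
end
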